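/- arXiv:0806.3691 — 2 statements merged into one kernel-verified Lean document; each statement's English description precedes it below -/
import Mathlib

section
/- In the braid group B∞, the square roots of free generators satisfy the star-graph relations: γ_j γ_k γ_j = γ_k γ_j γ_k for all j, k ≥ 1, and γ_l γ_k γ_j γ_l = γ_k γ_j γ_l γ_k = γ_j γ_l γ_k γ_j for all 1 ≤ j < k < l. -/
/-- The Artin braid relations on the free group with generators `σ_i`, `i ∈ ℕ+`. -/
def braidRels : Set (FreeGroup ℕ+) :=
  {r | ∃ i j : ℕ+,
    ((j : ℕ) = (i : ℕ) + 1 ∧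
      r = FreeGroup.of i * FreeGroup.of j * FreeGroup.of i *
          (FreeGroup.of j * FreeGroup.of i * FreeGroup.of j)⁻¹) ∨
    ((i : ℕ) + 1 < (j : ℕ) ∧
      r = FreeGroup.of i * FreeGroup.of j * (FreeGroup.of j * FreeGroup.of i)⁻¹)}

/-- The braid group `B∞` on infinitely many strands, presented by the Artin generators
`σ_1, σ_2, …` subject to the braid relations. -/
abbrev BraidInf : Type := PresentedGroup braidRels

/-- The Artin generator `σ_n` of `B∞` for `n ≥ 1`, with the paper's convention `σ_0 = 1`. -/
def sig (n : ℕ) : BraidInf :=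
  if h : 0 < n then PresentedGroup.of (⟨n, h⟩ : ℕ+) else 1

/-- Ascending product `f a * f (a+1) * ⋯ * f b` (equal to `1` when `b < a`). -/
def ascProd {G : Type*} [Monoid G] (f : ℕ → G) (a b : ℕ) : G :=
  ((List.range' a (b + 1 - a)).map f).prod

/-- Descending product `f b * f (b-1) * ⋯ * f a` (equal to `1` when `b < a`). -/
def descProd {G : Type*} [Monoid G] (f : ℕ → G) (b a : ℕ) : G :=
  (((List.range' a (b + 1 - a)).map f).reverse).prod

/-- The square roots of free generators
`γ_k = (σ_1 ⋯ σ_{k−1}) σ_k (σ_{k−1}^{−1} ⋯ σ_1^{−1})` of `B∞`. -/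
def γ (k : ℕ) : BraidInf :=
  ascProd sig 1 (k - 1) * sig k * descProd (fun i => (sig i)⁻¹) (k - 1) 1

/-- The subgroup `B_n` of `B∞` generated by `σ_1, …, σ_{n−1}`. -/
def Bsub (n : ℕ) : Subgroup BraidInf :=
  Subgroup.closure {x | ∃ i : ℕ, 1 ≤ i ∧ i < n ∧ x = sig i}

/-- The subgroup `B_{m,∞}` of `B∞` generated by `{σ_k : k ≥ m}`. -/
def BFrom (m : ℕ) : Subgroup BraidInf :=
  Subgroup.closure {x | ∃ i : ℕ, m ≤ i ∧ x = sig i}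

theorem braid_rel1 {i j : ℕ+} (h : (j : ℕ) = (i : ℕ) + 1) :
    (PresentedGroup.of i : BraidInf) * .of j * .of i = .of j * .of i * .of j := by
  have h1 : (FreeGroup.of i * FreeGroup.of j * FreeGroup.of i *
      (FreeGroup.of j * FreeGroup.of i * FreeGroup.of j)⁻¹) ∈ braidRels :=
    ⟨i, j, Or.inl ⟨h, rfl⟩⟩
  have h2 : (PresentedGroup.mk braidRels) (FreeGroup.of i * FreeGroup.of j * FreeGroup.of i *
      (FreeGroup.of j * FreeGroup.of i * FreeGroup.of j)⁻¹) = 1 :=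
    (QuotientGroup.eq_one_iff _).mpr (Subgroup.subset_normalClosure h1)
  simp only [map_mul, map_inv] at h2
  exact mul_inv_eq_one.mp h2

theorem braid_rel2 {i j : ℕ+} (h : (i : ℕ) + 1 < (j : ℕ)) :
    (PresentedGroup.of i : BraidInf) * .of j = .of j * .of i := by
  have h1 : (FreeGroup.of i * FreeGroup.of j * (FreeGroup.of j * FreeGroup.of i)⁻¹) ∈ braidRels :=
    ⟨i, j, Or.inr ⟨h, rfl⟩⟩
  have h2 : (PresentedGroup.mk braidRels) (FreeGroup.of i * FreeGroup.of j *
      (FreeGroup.of j * FreeGroup.of i)⁻¹) = 1 :=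
    (QuotientGroup.eq_one_iff _).mpr (Subgroup.subset_normalClosure h1)
  simp only [map_mul, map_inv] at h2
  exact mul_inv_eq_one.mp h2

theorem shMap_rels : ∀ r ∈ braidRels,
    FreeGroup.lift (fun i : ℕ+ => (PresentedGroup.of (i + 1) : BraidInf)) r = 1 := by
  rintro r ⟨i, j, ⟨h, rfl⟩ | ⟨h, rfl⟩⟩
  · simp only [map_mul, map_inv, FreeGroup.lift_apply_of]
    rw [mul_inv_eq_one]
    exact braid_rel1 (by push_cast; omega)
  · simp only [map_mul, map_inv, FreeGroup.lift_apply_of]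
    rw [mul_inv_eq_one]
    exact braid_rel2 (by push_cast; omega)

/-- The shift endomorphism `sh` of `B∞`, determined by `sh(σ_i) = σ_{i+1}`. -/
def sh : BraidInf →* BraidInf := PresentedGroup.toGroup shMap_rels

/-- The `m`-shift `sh_m(τ) = σ_m σ_{m−1} ⋯ σ_1 ⬝ sh(τ) ⬝ σ_1^{−1} ⋯ σ_{m−1}^{−1} σ_m^{−1}`. -/
def shm (m : ℕ) (τ : BraidInf) : BraidInf :=
  descProd sig m 1 * sh τ * ascProd (fun i => (sig i)⁻¹) 1 m

/-! Conjugation by `σ_1` after the shift `sh` sends `γ_k` to `γ_{k+1}`, so every relation among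
the `γ`'s propagates along this endomorphism and only the case `j = 1` needs an argument. There
everything comes from `σ_1` commuting with the image of `sh ∘ sh`: it exhibits `γ_k` as the
conjugate of `σ_1` by an element of the image of `sh` (whence the braid relation with `σ_1`), and
it makes `γ_K` commute with `σ_2, …, σ_{K-1}`, hence with `sh (B_{K-1})`. The relations on three
generators are then formal consequences of the braid relations and of `γ_l` commuting with
`γ_j⁻¹ γ_k γ_j`. -/

section General

variable {G : Type*}

lemma ascProd_succ_right [Monoid G] (f : ℕ → G) {a b : ℕ} (h : a ≤ b + 1) :
    ascProd f a (b + 1) = ascProd f a b * f (b + 1) := by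
  unfold ascProd
  rw [show b + 1 + 1 - a = (b + 1 - a) + 1 by omega, List.range'_concat]
  simp [show a + (b + 1 - a) = b + 1 by omega]

lemma descProd_inv [Group G] (f : ℕ → G) (b a : ℕ) :
    descProd (fun i => (f i)⁻¹) b a = (ascProd f a b)⁻¹ := by
  simp [descProd, ascProd, List.prod_inv_reverse, Function.comp_def]

lemma ascProd_mem [Monoid G] {S : Type*} [SetLike S G] [SubmonoidClass S G] {s : S}
    {f : ℕ → G} {a b : ℕ} (h : ∀ i, a ≤ i → i ≤ b → f i ∈ s) : ascProd f a b ∈ s := by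
  refine list_prod_mem fun x hx => ?_
  obtain ⟨i, hi, rfl⟩ := List.mem_map.mp hx
  rw [List.mem_range'_1] at hi
  exact h i hi.1 (by omega)

lemma conj_conj_of_commute [Group G] {a w : G} (h : Commute a w) (x : G) :
    MulAut.conj a (w⁻¹ * x * w) = w⁻¹ * MulAut.conj a x * w := by
  simp only [MulAut.conj_apply]
  calc a * (w⁻¹ * x * w) * a⁻¹ = a * w⁻¹ * x * (w * a⁻¹) := by group
    _ = w⁻¹ * a * x * (a⁻¹ * w) := by rw [h.inv_right.eq, h.inv_left.eq]
    _ = w⁻¹ * (a * x * a⁻¹) * w := by group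

lemma star_relations_of_braid_of_commute [Group G] {x y z : G}
    (hxy : x * y * x = y * x * y) (hxz : x * z * x = z * x * z) (hyz : y * z * y = z * y * z)
    (hc : Commute z (x⁻¹ * y * x)) :
    z * y * x * z = y * x * z * y ∧ y * x * z * y = x * z * y * x := by
  have he : x⁻¹ * y * x = y * x * y⁻¹ :=
    calc x⁻¹ * y * x = x⁻¹ * (y * x * y) * y⁻¹ := by group
      _ = y * x * y⁻¹ := by rw [← hxy]; group
  have h1 : z * y * x * z = y * x * z * y :=
    calc z * y * x * z = z * (y * x * y⁻¹) * (y * z) := by group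
      _ = (x⁻¹ * y * x) * (z * y * z) := by rw [← he, hc.eq]; group
      _ = (y * x * y⁻¹) * (y * z * y) := by rw [← hyz, he]
      _ = y * x * z * y := by group
  have h2 : x * z * y * x = z * y * x * z :=
    calc x * z * y * x = z * x * (z * (x⁻¹ * y * x)) := by rw [← mul_assoc, ← hxz]; group
      _ = z * y * x * z := by rw [hc.eq]; group
  exact ⟨h1, h1.symm.trans h2.symm⟩

end General

lemma sig_of_pos {i : ℕ} (h : 0 < i) : sig i = PresentedGroup.of (⟨i, h⟩ : ℕ+) := dif_pos h

lemma sig_braid {i : ℕ} (h : 1 ≤ i) :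
    sig i * sig (i + 1) * sig i = sig (i + 1) * sig i * sig (i + 1) := by
  rw [sig_of_pos h, sig_of_pos i.succ_pos]
  exact braid_rel1 rfl

lemma sig_commute {i j : ℕ} (h : i + 1 < j) : Commute (sig i) (sig j) := by
  rcases Nat.eq_zero_or_pos i with rfl | hi
  · simp [sig]
  · rw [sig_of_pos hi, sig_of_pos (by omega : 0 < j)]
    exact braid_rel2 h

lemma sig_coe_pnat (i : ℕ+) : sig i = PresentedGroup.of i := sig_of_pos i.pos

lemma sig_mul_sig_succ_mul_inv {i : ℕ} (h : 1 ≤ i) :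
    sig i * sig (i + 1) * (sig i)⁻¹ = (sig (i + 1))⁻¹ * sig i * sig (i + 1) :=
  calc sig i * sig (i + 1) * (sig i)⁻¹
      = (sig (i + 1))⁻¹ * (sig (i + 1) * sig i * sig (i + 1)) * (sig i)⁻¹ := by group
    _ = (sig (i + 1))⁻¹ * sig i * sig (i + 1) := by rw [← sig_braid h]; group

lemma sh_sig {i : ℕ} (h : 1 ≤ i) : sh (sig i) = sig (i + 1) := by
  lift i to ℕ+ using h
  rw [sig_coe_pnat]
  exact (PresentedGroup.toGroup.of shMap_rels).trans (sig_coe_pnat (i + 1)).symm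

lemma sig_mem_Bsub {i n : ℕ} (h : i < n) : sig i ∈ Bsub n := by
  rcases Nat.eq_zero_or_pos i with rfl | hi
  · simp [sig]
  · exact Subgroup.subset_closure ⟨i, hi, h, rfl⟩

lemma gamma_eq_conj (k : ℕ) :
    γ k = ascProd sig 1 (k - 1) * sig k * (ascProd sig 1 (k - 1))⁻¹ := by
  rw [γ, descProd_inv]

lemma gamma_mem_Bsub {k n : ℕ} (h : k < n) : γ k ∈ Bsub n := by
  have hP : ascProd sig 1 (k - 1) ∈ Bsub n := ascProd_mem fun i _ hi => sig_mem_Bsub (by omega)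
  rw [gamma_eq_conj]
  exact mul_mem (mul_mem hP (sig_mem_Bsub h)) (inv_mem hP)

lemma ascProd_sig_succ (n : ℕ) : ascProd sig 1 (n + 1) = sig 1 * sh (ascProd sig 1 n) := by
  induction n with
  | zero => simp [ascProd]
  | succ n ih =>
    calc ascProd sig 1 (n + 2) = sig 1 * sh (ascProd sig 1 n) * sh (sig (n + 1)) := by
          rw [ascProd_succ_right sig (by omega), ih, sh_sig (by omega)]
      _ = sig 1 * sh (ascProd sig 1 (n + 1)) := by
          rw [ascProd_succ_right sig (by omega), map_mul, mul_assoc]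

lemma gamma_one : γ 1 = sig 1 := by
  simp [γ, ascProd, descProd]

lemma gamma_succ {k : ℕ} (hk : 1 ≤ k) : γ (k + 1) = MulAut.conj (sig 1) (sh (γ k)) := by
  obtain ⟨n, rfl⟩ : ∃ n, k = n + 1 := ⟨k - 1, by omega⟩
  simp only [gamma_eq_conj, Nat.add_sub_cancel, ascProd_sig_succ, map_mul, map_inv,
    sh_sig (by omega : 1 ≤ n + 1), MulAut.conj_apply]
  group

lemma sig_one_commute_sh_sh (x : BraidInf) : Commute (sig 1) (sh (sh x)) := by
  have hconj : (MulAut.conj (sig 1)).toMonoidHom.comp (sh.comp sh) = sh.comp sh := by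
    refine PresentedGroup.ext fun i => ?_
    have hi : sh (sh (.of i)) = sig (i + 2) := by
      rw [← sig_coe_pnat, sh_sig i.pos, sh_sig (by omega)]
    simp only [MonoidHom.comp_apply, MulEquiv.coe_toMonoidHom, hi, MulAut.conj_apply]
    rw [(sig_commute (by have := i.pos; omega : 1 + 1 < (i : ℕ) + 2)).eq, mul_inv_cancel_right]
  have hx := DFunLike.congr_fun hconj x
  simp only [MonoidHom.comp_apply, MulEquiv.coe_toMonoidHom, MulAut.conj_apply] at hx
  exact mul_inv_eq_iff_eq_mul.mp hx

lemma exists_gamma_eq_conj_sh {k : ℕ} (hk : 1 ≤ k) : ∃ u, γ k = (sh u)⁻¹ * sig 1 * sh u := by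
  induction k, hk using Nat.le_induction with
  | base => exact ⟨1, by simp [gamma_one]⟩
  | succ k hk ih =>
    obtain ⟨u, hu⟩ := ih
    refine ⟨sig 1 * sh u, ?_⟩
    set w := sh (sh u)
    calc γ (k + 1) = MulAut.conj (sig 1) (w⁻¹ * sig 2 * w) := by
          rw [gamma_succ hk, hu]
          simp only [map_mul, map_inv, sh_sig le_rfl, w]
      _ = w⁻¹ * ((sig 2)⁻¹ * sig 1 * sig 2) * w := by
          rw [conj_conj_of_commute (sig_one_commute_sh_sh u), MulAut.conj_apply,
            sig_mul_sig_succ_mul_inv le_rfl]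
      _ = (sh (sig 1 * sh u))⁻¹ * sig 1 * sh (sig 1 * sh u) := by
          simp only [map_mul, sh_sig le_rfl, w]
          group

lemma sig_one_braid_sh_gamma {k : ℕ} (hk : 1 ≤ k) :
    sig 1 * sh (γ k) * sig 1 = sh (γ k) * sig 1 * sh (γ k) := by
  obtain ⟨u, hu⟩ := exists_gamma_eq_conj_sh hk
  set w := sh (sh u)
  have hc : Commute (sig 1) w := sig_one_commute_sh_sh u
  have hw : w⁻¹ * sig 1 * w = sig 1 := by rw [mul_assoc, hc.eq]; group
  have h := congrArg (MulAut.conj w⁻¹) (sig_braid le_rfl)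
  simp only [map_mul, MulAut.conj_apply, inv_inv, hw] at h
  simpa only [hu, map_mul, map_inv, sh_sig le_rfl] using h

lemma gamma_braid_of_lt {j k : ℕ} (hj : 1 ≤ j) (hjk : j < k) :
    γ j * γ k * γ j = γ k * γ j * γ k := by
  obtain ⟨m, rfl⟩ : ∃ m, k = m + 1 := ⟨k - 1, by omega⟩
  induction j, hj using Nat.le_induction generalizing m with
  | base =>
    have h := congrArg (MulAut.conj (sig 1)) (sig_one_braid_sh_gamma (k := m) (by omega))
    have hfix : MulAut.conj (sig 1) (sig 1) = sig 1 := by simp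
    simpa only [map_mul, hfix, gamma_one, gamma_succ (by omega : 1 ≤ m)] using h
  | succ j hj ih =>
    obtain ⟨p, rfl⟩ : ∃ p, m = p + 1 := ⟨m - 1, by omega⟩
    have h := congrArg (fun x => MulAut.conj (sig 1) (sh x)) (ih p (by omega))
    simpa only [map_mul, ← gamma_succ hj, ← gamma_succ (by omega : 1 ≤ p + 1)] using h

lemma gamma_braid {j k : ℕ} (hj : 1 ≤ j) (hk : 1 ≤ k) :
    γ j * γ k * γ j = γ k * γ j * γ k := by
  rcases lt_trichotomy j k with h | rfl | h
  · exact gamma_braid_of_lt hj h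
  · rfl
  · exact (gamma_braid_of_lt hk h).symm

lemma sig_commute_gamma {i K : ℕ} (hi : 2 ≤ i) (hiK : i < K) : Commute (sig i) (γ K) := by
  induction K generalizing i with
  | zero => omega
  | succ K ih =>
    rw [gamma_succ (by omega)]
    obtain ⟨i, rfl⟩ : ∃ i', i = i' + 1 := ⟨i - 1, by omega⟩
    rcases Nat.lt_or_ge i 2 with hi1 | hi2
    · obtain rfl : i = 1 := by omega
      obtain ⟨m, rfl⟩ : ∃ m, K = m + 1 := ⟨K - 1, by omega⟩
      have hσ : MulAut.conj (sig 1 * sig 2) (sig 1) = sig 2 := by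
        rw [MulAut.conj_apply, sig_braid le_rfl]
        group
      have hγ : MulAut.conj (sig 1) (sh (γ (m + 1))) =
          MulAut.conj (sig 1 * sig 2) (sh (sh (γ m))) := by
        rw [gamma_succ (by omega)]
        simp only [MulAut.conj_apply]
        simp only [map_mul, map_inv, sh_sig le_rfl]
        group
      have h := (sig_one_commute_sh_sh (γ m)).map (MulAut.conj (sig 1 * sig 2))
      rw [hσ] at h
      rwa [hγ]
    · have hsh : Commute (sig (i + 1)) (sh (γ K)) := by
        simpa only [sh_sig (by omega : 1 ≤ i)] using (ih hi2 (by omega)).map sh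
      have h1 : Commute (sig (i + 1)) (sig 1) := (sig_commute (by omega)).symm
      rw [MulAut.conj_apply]
      exact (h1.mul_right hsh).mul_right h1.inv_right

lemma sh_commute_gamma_of_mem_Bsub {n K : ℕ} {y : BraidInf} (hy : y ∈ Bsub n) (hn : n < K) :
    Commute (sh y) (γ K) := by
  have hle : Bsub n ≤ (Subgroup.centralizer {γ K}).comap sh := by
    rw [Bsub, Subgroup.closure_le]
    rintro _ ⟨i, hi, hin, rfl⟩
    rw [SetLike.mem_coe, Subgroup.mem_comap, Subgroup.mem_centralizer_singleton_iff, sh_sig hi]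
    exact (sig_commute_gamma (i := i + 1) (by omega) (by omega)).eq
  exact Subgroup.mem_centralizer_singleton_iff.mp (hle hy)

lemma gamma_commute_conj {j k l : ℕ} (hj : 1 ≤ j) (hjk : j < k) (hkl : k < l) :
    Commute (γ l) ((γ j)⁻¹ * γ k * γ j) := by
  obtain ⟨m, rfl⟩ : ∃ m, k = m + 1 := ⟨k - 1, by omega⟩
  induction j, hj using Nat.le_induction generalizing m l with
  | base =>
    have h : (γ 1)⁻¹ * γ (m + 1) * γ 1 = sh (γ m) := by
      rw [gamma_one, gamma_succ (by omega), MulAut.conj_apply]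
      group
    rw [h]
    exact (sh_commute_gamma_of_mem_Bsub (gamma_mem_Bsub (Nat.lt_succ_self m)) hkl).symm
  | succ j hj ih =>
    obtain ⟨p, rfl⟩ : ∃ p, m = p + 1 := ⟨m - 1, by omega⟩
    obtain ⟨q, rfl⟩ : ∃ q, l = q + 1 := ⟨l - 1, by omega⟩
    have h := (ih p (by omega) (l := q) (by omega)).map
      ((MulAut.conj (sig 1)).toMonoidHom.comp sh)
    simpa only [MonoidHom.comp_apply, MulEquiv.coe_toMonoidHom, map_mul, map_inv,
      ← gamma_succ hj, ← gamma_succ (by omega : 1 ≤ p + 1), ← gamma_succ (by omega : 1 ≤ q)] using h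

/-- The square roots of free generators satisfy the star-graph relations:
`γ_j γ_k γ_j = γ_k γ_j γ_k` for all `j, k ≥ 1`, and
`γ_l γ_k γ_j γ_l = γ_k γ_j γ_l γ_k = γ_j γ_l γ_k γ_j` for all `1 ≤ j < k < l`. -/
theorem gamma_star_graph_relations :
    (∀ j k : ℕ, 1 ≤ j → 1 ≤ k → γ j * γ k * γ j = γ k * γ j * γ k) ∧
    (∀ j k l : ℕ, 1 ≤ j → j < k → k < l →
      γ l * γ k * γ j * γ l = γ k * γ j * γ l * γ k ∧
      γ k * γ j * γ l * γ k = γ j * γ l * γ k * γ j) := by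
  refine ⟨fun j k hj hk => gamma_braid hj hk, fun j k l hj hjk hkl => ?_⟩
  exact star_relations_of_braid_of_commute (gamma_braid hj (by omega))
    (gamma_braid hj (by omega)) (gamma_braid (by omega) (by omega))
    (gamma_commute_conj hj hjk hkl)
end

section
/- For every n ≥ 3, the braid group B_n is also presented by generators g̃_1, …, g̃_{n−1} subject to the relations g̃_l (g̃_k g̃_{k+1} ⋯ g̃_{l−2}) g̃_{l−1} g̃_l = g̃_{l−1} g̃_l (g̃_k g̃_{k+1} ⋯ g̃_{l−2}) g̃_{l−1} for all 0 < k < l < n (where for k = l−1 the inner product g̃_k ⋯ g̃_{l−2} is empty); i.e., the group with this presentation is isomorphic to B_n. -/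
/-- The letter `g̃_j` in the free group on generators indexed by `{k // 1 ≤ k ∧ k < n}`
(`1` for out-of-range indices, which never occur in the relations below). -/
def ebtGen (n : ℕ) (j : ℕ) : FreeGroup {k : ℕ // 1 ≤ k ∧ k < n} :=
  if h : 1 ≤ j ∧ j < n then FreeGroup.of ⟨j, h⟩ else 1

/-- The relations `g̃_l (g̃_k g̃_{k+1} ⋯ g̃_{l−2}) g̃_{l−1} g̃_l
= g̃_{l−1} g̃_l (g̃_k g̃_{k+1} ⋯ g̃_{l−2}) g̃_{l−1}` for `0 < k < l < n`. -/
def ebTildeRels (n : ℕ) : Set (FreeGroup {k : ℕ // 1 ≤ k ∧ k < n}) :=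
  {r | ∃ k l : ℕ, 0 < k ∧ k < l ∧ l < n ∧
    r = (ebtGen n l * ascProd (ebtGen n) k (l - 2) * ebtGen n (l - 1) * ebtGen n l) *
        (ebtGen n (l - 1) * ebtGen n l * ascProd (ebtGen n) k (l - 2) * ebtGen n (l - 1))⁻¹}

section ascProd

variable {G : Type*} [Monoid G] (f : ℕ → G)

theorem ascProd_of_lt {a b : ℕ} (h : b < a) : ascProd f a b = 1 := by
  simp [ascProd, show b + 1 - a = 0 by omega]

theorem ascProd_succ {a b : ℕ} (h : a ≤ b + 1) :
    ascProd f a (b + 1) = ascProd f a b * f (b + 1) := by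
  rw [ascProd, show b + 1 + 1 - a = b + 1 - a + 1 by omega, List.range'_concat]
  simp [show a + (b + 1 - a) = b + 1 by omega, ascProd]

theorem ascProd_eq_mul_ascProd {a b : ℕ} (h : a ≤ b) :
    ascProd f a b = f a * ascProd f (a + 1) b := by
  rw [ascProd, show b + 1 - a = b - a + 1 by omega, List.range'_succ]
  simp [ascProd, show b + 1 - (a + 1) = b - a by omega]

theorem ascProd_mul_ascProd {a c b : ℕ} (hac : a ≤ c + 1) (hcb : c ≤ b) :
    ascProd f a c * ascProd f (c + 1) b = ascProd f a b := by
  have h := List.range'_append (s := a) (m := c + 1 - a) (n := b - c) (step := 1)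
  rw [show a + 1 * (c + 1 - a) = c + 1 by omega, show c + 1 - a + (b - c) = b + 1 - a by omega] at h
  rw [ascProd, ascProd, ascProd, show b + 1 - (c + 1) = b - c by omega, ← List.prod_append,
    ← List.map_append, h]

theorem map_ascProd {H : Type*} [Monoid H] (φ : G →* H) (a b : ℕ) :
    φ (ascProd f a b) = ascProd (fun i => φ (f i)) a b := by
  simp [ascProd, map_list_prod, Function.comp_def]

theorem ascProd_commute {x : G} {a b : ℕ} (h : ∀ t, a ≤ t → t ≤ b → Commute (f t) x) :
    Commute (ascProd f a b) x :=
  Commute.list_prod_left _ _ <| by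
    simp only [List.mem_map, List.mem_range'_1]
    rintro _ ⟨t, ⟨hat, htb⟩, rfl⟩
    exact h t hat (by omega)

end ascProd

section Families

variable {G : Type*} [Group G] {n : ℕ}

structure IsBraidFamily (s : ℕ → G) (n : ℕ) : Prop where
  braid : ∀ i, 1 ≤ i → i + 2 ≤ n → s i * s (i + 1) * s i = s (i + 1) * s i * s (i + 1)
  comm : ∀ i j, 1 ≤ i → i + 2 ≤ j → j < n → Commute (s i) (s j)

def IsEbTildeFamily (g : ℕ → G) (n : ℕ) : Prop :=
  ∀ k l, 0 < k → k < l → l < n →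
    g l * ascProd g k (l - 2) * g (l - 1) * g l = g (l - 1) * g l * ascProd g k (l - 2) * g (l - 1)

/-- For `f = sig` this is `(γ k)⁻¹`. -/
def dual (f : ℕ → G) (k : ℕ) : G :=
  MulAut.conj (ascProd f 1 (k - 1)) (f k)⁻¹

theorem dual_eq_one {f : ℕ → G} {k : ℕ} (h : f k = 1) : dual f k = 1 := by
  simp [dual, h]

theorem ascProd_dual (f : ℕ → G) (j : ℕ) : ascProd (dual f) 1 j = (ascProd f 1 j)⁻¹ := by
  induction j with
  | zero => simp [ascProd_of_lt _ zero_lt_one]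
  | succ j ih =>
    simp only [ascProd_succ _ (Nat.le_add_left 1 j), ih, dual, Nat.add_sub_cancel,
      MulAut.conj_apply]
    group

theorem dual_dual (f : ℕ → G) : dual (dual f) = f := by
  ext k
  simp [dual, ascProd_dual]

theorem map_dual {H : Type*} [Group H] (φ : G →* H) (f : ℕ → G) (k : ℕ) :
    φ (dual f k) = dual (fun i => φ (f i)) k := by
  rw [dual, dual, MulAut.conj_apply, MulAut.conj_apply, map_mul, map_mul, map_inv, map_inv,
    map_ascProd]

theorem dual_add_two (f : ℕ → G) (k : ℕ) :
    dual f (k + 2) = MulAut.conj (ascProd f 1 k) (MulAut.conj (f (k + 1)) (f (k + 2))⁻¹) := by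
  rw [dual, show k + 2 - 1 = k + 1 by omega, ascProd_succ f (Nat.le_add_left 1 k), map_mul,
    MulAut.mul_apply]

theorem IsBraidFamily.mono {s : ℕ → G} {m : ℕ} (hs : IsBraidFamily s m)
    (h : n ≤ m) : IsBraidFamily s n :=
  ⟨fun i hi hin => hs.braid i hi (by omega), fun i j hi hij hjn => hs.comm i j hi hij (by omega)⟩

theorem IsBraidFamily.commute_ascProd {s : ℕ → G} (hs : IsBraidFamily s n) {i a b : ℕ}
    (ha : 1 ≤ a) (hb : b + 2 ≤ i) (hi : i < n) : Commute (ascProd s a b) (s i) :=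
  ascProd_commute s fun t hat htb => hs.comm t i (by omega) (by omega) hi

/-- With `c = a b⁻¹ a⁻¹` this is the shape of (EB~); for `M = 1` it is the braid relation
between `a⁻¹` and `c`. -/
theorem ebTilde_identity_of_braid {a b M : G} (hab : a * b * a = b * a * b) (hM : Commute M b) :
    MulAut.conj a b⁻¹ * M * a⁻¹ * MulAut.conj a b⁻¹ = a⁻¹ * MulAut.conj a b⁻¹ * M * a⁻¹ := by
  have hab' : a * b⁻¹ * a⁻¹ * b⁻¹ = b⁻¹ * a⁻¹ := by
    calc a * b⁻¹ * a⁻¹ * b⁻¹ = a * (b * a * b)⁻¹ * (a * b * a) * a⁻¹ * (b⁻¹ * a⁻¹) := by group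
      _ = b⁻¹ * a⁻¹ := by rw [hab]; group
  calc MulAut.conj a b⁻¹ * M * a⁻¹ * MulAut.conj a b⁻¹
      = a * b⁻¹ * a⁻¹ * (M * b⁻¹) * a⁻¹ := by simp only [MulAut.conj_apply]; group
    _ = a * b⁻¹ * a⁻¹ * b⁻¹ * M * a⁻¹ := by rw [hM.inv_right.eq]; group
    _ = a⁻¹ * MulAut.conj a b⁻¹ * M * a⁻¹ := by rw [hab']; simp only [MulAut.conj_apply]; group

theorem IsBraidFamily.isEbTildeFamily_dual {s : ℕ → G} (hs : IsBraidFamily s n) :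
    IsEbTildeFamily (dual s) n := by
  intro k l hk hkl hln
  obtain ⟨l, rfl⟩ : ∃ j, l = j + 2 := ⟨l - 2, by omega⟩
  simp only [Nat.add_sub_cancel, show l + 2 - 1 = l + 1 by omega]
  set P := ascProd s 1 l
  set T := ascProd s 1 (k - 1)
  have hmid : ascProd (dual s) k l = MulAut.conj P (P⁻¹ * T) := by
    have h := ascProd_mul_ascProd (dual s) (a := 1) (c := k - 1) (b := l) (by omega) (by omega)
    rw [ascProd_dual, ascProd_dual, Nat.sub_add_cancel hk] at h
    rw [inv_mul_eq_iff_eq_mul.mp h, MulAut.conj_apply, mul_inv_cancel_left]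
  have hM : Commute (P⁻¹ * T) (s (l + 2)) :=
    (hs.commute_ascProd le_rfl le_rfl hln).inv_left.mul_left
      (hs.commute_ascProd le_rfl (by omega) hln)
  rw [hmid, dual_add_two, dual, Nat.add_sub_cancel, ← map_mul, ← map_mul, ← map_mul, ← map_mul,
    ← map_mul, ← map_mul, ebTilde_identity_of_braid (hs.braid (l + 1) (by omega) (by omega)) hM]

theorem IsEbTildeFamily.braid {g : ℕ → G} (hg : IsEbTildeFamily g n) {i : ℕ} (hi : 1 ≤ i)
    (hin : i + 2 ≤ n) : g i * g (i + 1) * g i = g (i + 1) * g i * g (i + 1) := by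
  have h := hg i (i + 1) hi (Nat.lt_succ_self i) (by omega)
  simp only [Nat.add_sub_cancel, ascProd_of_lt g (show i + 1 - 2 < i by omega), mul_one] at h
  exact h.symm

theorem commute_conj_of_ebTilde {x P u v : G} (h₁ : v * (x * P) * u * v = u * v * (x * P) * u)
    (h₂ : v * P * u * v = u * v * P * u) (h₃ : u * v * u = v * u * v) :
    Commute x (MulAut.conj u v) := by
  have hx : v * x * v⁻¹ * (u * v) = u * v * x := by
    refine mul_right_cancel (b := P * u) ?_
    calc v * x * v⁻¹ * (u * v) * (P * u) = v * x * v⁻¹ * (u * v * P * u) := by group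
      _ = v * (x * P) * u * v := by rw [← h₂]; group
      _ = u * v * x * (P * u) := by rw [h₁]; group
  have hw : MulAut.conj u v = v⁻¹ * u * v := by
    calc MulAut.conj u v = v⁻¹ * (v * u * v) * u⁻¹ := by rw [MulAut.conj_apply]; group
      _ = v⁻¹ * u * v := by rw [← h₃]; group
  rw [hw, Commute, SemiconjBy]
  calc x * (v⁻¹ * u * v) = v⁻¹ * (v * x * v⁻¹ * (u * v)) := by group
    _ = v⁻¹ * u * v * x := by rw [hx]; group

theorem IsEbTildeFamily.commute_conj {g : ℕ → G} (hg : IsEbTildeFamily g n) {k l : ℕ}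
    (hk : 1 ≤ k) (hkl : k ≤ l) (hl : l + 2 < n) :
    Commute (g k) (MulAut.conj (g (l + 1)) (g (l + 2))) := by
  have h₁ := hg k (l + 2) hk (by omega) hl
  have h₂ := hg (k + 1) (l + 2) (by omega) (by omega) hl
  simp only [Nat.add_sub_cancel, show l + 2 - 1 = l + 1 by omega] at h₁ h₂
  rw [ascProd_eq_mul_ascProd g hkl] at h₁
  exact commute_conj_of_ebTilde (by simpa only [mul_assoc] using h₁) h₂
    (hg.braid (by omega) (by omega))

theorem IsEbTildeFamily.isBraidFamily_dual {g : ℕ → G} (hg : IsEbTildeFamily g n) :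
    IsBraidFamily (dual g) n := by
  have dual_succ : ∀ i, dual g (i + 1) = MulAut.conj (ascProd g 1 i) (g (i + 1))⁻¹ := fun i => by
    rw [dual, Nat.add_sub_cancel]
  constructor
  · intro i hi hin
    obtain ⟨i, rfl⟩ : ∃ j, i = j + 1 := ⟨i - 1, by omega⟩
    have h := ebTilde_identity_of_braid (hg.braid (i := i + 1) (by omega) hin) (Commute.one_left _)
    rw [mul_one, mul_one] at h
    rw [dual_succ, dual_add_two, ← map_mul, ← map_mul, ← map_mul, ← map_mul, h]
  · intro i j hi hij hjn
    obtain ⟨i, rfl⟩ : ∃ k, i = k + 1 := ⟨i - 1, by omega⟩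
    obtain ⟨l, rfl⟩ : ∃ k, j = k + 2 := ⟨j - 2, by omega⟩
    set w := MulAut.conj (g (l + 1)) (g (l + 2))
    have hQ : Commute (ascProd g (i + 1) l) w⁻¹ :=
      ascProd_commute g fun t ht htl => (hg.commute_conj (by omega) htl hjn).inv_right
    have hj : dual g (l + 2) = MulAut.conj (ascProd g 1 i) w⁻¹ := by
      rw [dual_add_two, ← ascProd_mul_ascProd g (c := i) (by omega) (by omega), map_mul,
        MulAut.mul_apply, map_inv, MulAut.conj_apply (ascProd g (i + 1) l), hQ.eq,
        mul_inv_cancel_right]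
    rw [dual_succ, hj]
    exact ((hg.commute_conj (by omega) (by omega) hjn).inv_inv).map (MulAut.conj _)

end Families

abbrev GenIdx (n : ℕ) : Type := {k : ℕ // 1 ≤ k ∧ k < n}

section PresentedGen

variable {n : ℕ} {rels : Set (FreeGroup (GenIdx n))}

def presGen (rels : Set (FreeGroup (GenIdx n))) (i : ℕ) : PresentedGroup rels :=
  PresentedGroup.mk rels (ebtGen n i)

theorem presGen_of_mem {i : ℕ} (hi : 1 ≤ i ∧ i < n) : presGen rels i = .of ⟨i, hi⟩ := by
  simp only [presGen, ebtGen, dif_pos hi]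
  rfl

theorem presGen_of_not_mem {i : ℕ} (hi : ¬(1 ≤ i ∧ i < n)) : presGen rels i = 1 := by
  simp only [presGen, ebtGen, dif_neg hi, map_one]

theorem presGen_hom_ext {G : Type*} [Group G] {φ ψ : PresentedGroup rels →* G}
    (h : ∀ i, 1 ≤ i → i < n → φ (presGen rels i) = ψ (presGen rels i)) : φ = ψ :=
  PresentedGroup.ext fun g => by simpa only [presGen_of_mem g.2] using h g g.2.1 g.2.2

theorem toGroup_presGen {G : Type*} [Group G] {f : ℕ → G}
    (h : ∀ r ∈ rels, FreeGroup.lift (fun g : GenIdx n => f g) r = 1) {i : ℕ} (hi : 1 ≤ i ∧ i < n) :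
    PresentedGroup.toGroup h (presGen rels i) = f i := by
  rw [presGen_of_mem hi, PresentedGroup.toGroup.of]

end PresentedGen

def artinRels (n : ℕ) : Set (FreeGroup (GenIdx n)) :=
  {r | ∃ i j : GenIdx n,
    ((j : ℕ) = i + 1 ∧
      r = .of i * .of j * .of i * (FreeGroup.of j * .of i * .of j)⁻¹) ∨
    ((i : ℕ) + 2 ≤ j ∧ r = .of i * .of j * (FreeGroup.of j * .of i)⁻¹)}

abbrev ArtinBraid (n : ℕ) : Type := PresentedGroup (artinRels n)

namespace ArtinBraid

variable {G : Type*} [Group G] {n : ℕ}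

/-- `1` unless `1 ≤ i < n`. -/
def σ (n i : ℕ) : ArtinBraid n := presGen (artinRels n) i

theorem of_eq_σ (g : GenIdx n) : (PresentedGroup.of g : ArtinBraid n) = σ n g :=
  (presGen_of_mem g.2).symm

theorem isBraidFamily_σ (n : ℕ) : IsBraidFamily (σ n) n where
  braid i hi hin := by
    rw [σ, σ, presGen_of_mem ⟨hi, by omega⟩, presGen_of_mem ⟨by omega, by omega⟩]
    exact PresentedGroup.mk_eq_mk_of_mul_inv_mem ⟨_, _, Or.inl ⟨rfl, rfl⟩⟩
  comm i j hi hij hjn := by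
    rw [Commute, SemiconjBy, σ, σ, presGen_of_mem ⟨hi, by omega⟩, presGen_of_mem ⟨by omega, hjn⟩]
    exact PresentedGroup.mk_eq_mk_of_mul_inv_mem ⟨⟨i, _⟩, ⟨j, _⟩, Or.inr ⟨hij, rfl⟩⟩

theorem lift_rels {f : ℕ → G} (hf : IsBraidFamily f n) :
    ∀ r ∈ artinRels n, FreeGroup.lift (fun g : GenIdx n => f g) r = 1 := by
  rintro r ⟨i, j, ⟨hij, rfl⟩ | ⟨hij, rfl⟩⟩ <;>
    simp only [map_mul, map_inv, FreeGroup.lift_apply_of, mul_inv_eq_one]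
  · rw [hij]
    exact hf.braid i i.2.1 (by omega)
  · exact hf.comm i j i.2.1 hij j.2.2

def lift {f : ℕ → G} (hf : IsBraidFamily f n) : ArtinBraid n →* G :=
  PresentedGroup.toGroup (lift_rels hf)

theorem lift_σ {f : ℕ → G} (hf : IsBraidFamily f n) {i : ℕ} (hi : 1 ≤ i ∧ i < n) :
    lift hf (σ n i) = f i :=
  toGroup_presGen _ hi

theorem lift_σ_of_eq_one {f : ℕ → G} (hf : IsBraidFamily f n)
    (hf₁ : ∀ i, ¬(1 ≤ i ∧ i < n) → f i = 1) (i : ℕ) : lift hf (σ n i) = f i := by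
  by_cases hi : 1 ≤ i ∧ i < n
  · exact lift_σ hf hi
  · rw [σ, presGen_of_not_mem hi, map_one, hf₁ i hi]

theorem hom_ext {φ ψ : ArtinBraid n →* G} (h : ∀ i, 1 ≤ i → i < n → φ (σ n i) = ψ (σ n i)) :
    φ = ψ :=
  presGen_hom_ext h

def incl {n m : ℕ} (h : n ≤ m) : ArtinBraid n →* ArtinBraid m :=
  lift ((isBraidFamily_σ m).mono h)

theorem incl_σ {n m : ℕ} (h : n ≤ m) {i : ℕ} (hi : 1 ≤ i ∧ i < n) : incl h (σ n i) = σ m i :=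
  lift_σ _ hi

end ArtinBraid

section EbTilde

variable {G : Type*} [Group G] {n : ℕ}

theorem lift_ebtGen {f : ℕ → G} (hf : ∀ j, ¬(1 ≤ j ∧ j < n) → f j = 1) (j : ℕ) :
    FreeGroup.lift (fun g : GenIdx n => f g) (ebtGen n j) = f j := by
  by_cases hj : 1 ≤ j ∧ j < n
  · rw [ebtGen, dif_pos hj, FreeGroup.lift_apply_of]
  · rw [ebtGen, dif_neg hj, map_one, hf j hj]

theorem forall_ebTildeRels_eq_one_iff (F : FreeGroup (GenIdx n) →* G) :
    (∀ r ∈ ebTildeRels n, F r = 1) ↔ IsEbTildeFamily (fun j => F (ebtGen n j)) n := by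
  simp only [ebTildeRels, IsEbTildeFamily]
  constructor
  · intro h k l hk hkl hln
    simpa only [map_mul, map_inv, mul_inv_eq_one, map_ascProd] using h _ ⟨k, l, hk, hkl, hln, rfl⟩
  · rintro h r ⟨k, l, hk, hkl, hln, rfl⟩
    simpa only [map_mul, map_inv, mul_inv_eq_one, map_ascProd] using h k l hk hkl hln

theorem isEbTildeFamily_presGen (n : ℕ) : IsEbTildeFamily (presGen (ebTildeRels n)) n :=
  (forall_ebTildeRels_eq_one_iff (PresentedGroup.mk _)).1 fun _ hr => PresentedGroup.one_of_mem hr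

theorem dual_σ_of_not_mem {j : ℕ} (hj : ¬(1 ≤ j ∧ j < n)) : dual (ArtinBraid.σ n) j = 1 :=
  dual_eq_one (presGen_of_not_mem hj)

def ebTildeToArtin (n : ℕ) : PresentedGroup (ebTildeRels n) →* ArtinBraid n :=
  PresentedGroup.toGroup (f := fun g : GenIdx n => dual (ArtinBraid.σ n) g) <|
    (forall_ebTildeRels_eq_one_iff _).2 <| by
      simpa only [lift_ebtGen fun _ => dual_σ_of_not_mem] using
        (ArtinBraid.isBraidFamily_σ n).isEbTildeFamily_dual

theorem ebTildeToArtin_presGen (j : ℕ) :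
    ebTildeToArtin n (presGen (ebTildeRels n) j) = dual (ArtinBraid.σ n) j := by
  by_cases hj : 1 ≤ j ∧ j < n
  · exact toGroup_presGen _ hj
  · rw [presGen_of_not_mem hj, map_one, dual_σ_of_not_mem hj]

def artinToEbTilde (n : ℕ) : ArtinBraid n →* PresentedGroup (ebTildeRels n) :=
  ArtinBraid.lift (isEbTildeFamily_presGen n).isBraidFamily_dual

theorem artinToEbTilde_σ (i : ℕ) :
    artinToEbTilde n (ArtinBraid.σ n i) = dual (presGen (ebTildeRels n)) i :=
  ArtinBraid.lift_σ_of_eq_one _ (fun _ hj => dual_eq_one (presGen_of_not_mem hj)) i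

def ebTildeEquivArtin (n : ℕ) : PresentedGroup (ebTildeRels n) ≃* ArtinBraid n :=
  (ebTildeToArtin n).toMulEquiv (artinToEbTilde n)
    (presGen_hom_ext fun j _ _ => by
      simp only [MonoidHom.comp_apply, ebTildeToArtin_presGen, map_dual, artinToEbTilde_σ,
        dual_dual, MonoidHom.id_apply])
    (ArtinBraid.hom_ext fun i _ _ => by
      simp only [MonoidHom.comp_apply, artinToEbTilde_σ, map_dual, ebTildeToArtin_presGen,
        dual_dual, MonoidHom.id_apply])

end EbTilde

namespace ArtinBraid

variable {m : ℕ}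

def combFactor (m i p : ℕ) : ArtinBraid m :=
  if 1 ≤ p ∧ p < i then σ m (i - 1) else if i + 1 < p ∧ p ≤ m + 1 then σ m i else 1

def combStep (m i : ℕ) : Equiv.Perm (ℕ × ArtinBraid m) :=
  (Equiv.swap i (i + 1)).prodShear fun p => Equiv.mulLeft (combFactor m i p)

section combFactor

variable {i p : ℕ}

theorem combFactor_of_lt (h₁ : 1 ≤ p) (h₂ : p < i) : combFactor m i p = σ m (i - 1) :=
  if_pos ⟨h₁, h₂⟩

theorem combFactor_of_gt (h₁ : i + 1 < p) (h₂ : p ≤ m + 1) : combFactor m i p = σ m i := by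
  rw [combFactor, if_neg (by omega), if_pos ⟨h₁, h₂⟩]

theorem combFactor_eq_one (h₁ : p = 0 ∨ i ≤ p) (h₂ : p ≤ i + 1 ∨ m + 1 < p) :
    combFactor m i p = 1 := by
  rw [combFactor, if_neg (by omega), if_neg (by omega)]

end combFactor

theorem combStep_apply (i p : ℕ) (b : ArtinBraid m) :
    combStep m i (p, b) = (Equiv.swap i (i + 1) p, combFactor m i p * b) :=
  rfl

theorem isBraidFamily_combStep (m : ℕ) : IsBraidFamily (combStep m) (m + 1) where
  braid i hi him := by
    ext ⟨p, b⟩ : 1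
    simp only [Equiv.Perm.mul_apply, combStep_apply, ← mul_assoc]
    obtain rfl | rfl | rfl | h | ⟨h₁, h₂⟩ | ⟨h₁, h₂⟩ : p = i ∨ p = i + 1 ∨ p = i + 2 ∨
      (p = 0 ∨ m + 1 < p) ∨ (1 ≤ p ∧ p < i) ∨ (i + 2 < p ∧ p ≤ m + 1) := by omega
    all_goals simp (disch := omega) only [Equiv.swap_apply_left, Equiv.swap_apply_right,
      Equiv.swap_apply_of_ne_of_ne, combFactor_of_lt, combFactor_of_gt, combFactor_eq_one,
      one_mul, mul_one, Nat.add_sub_cancel]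
    · obtain ⟨i, rfl⟩ : ∃ k, i = k + 1 := ⟨i - 1, by omega⟩
      rw [Nat.add_sub_cancel, (isBraidFamily_σ m).braid i (by omega) (by omega)]
    · rw [(isBraidFamily_σ m).braid i hi (by omega)]
  comm i j hi hij hjm := by
    have hσ := (isBraidFamily_σ m).comm
    ext ⟨p, b⟩ : 1
    simp only [Equiv.Perm.mul_apply, combStep_apply, ← mul_assoc]
    obtain rfl | rfl | rfl | rfl | h | ⟨h₁, h₂⟩ | ⟨h₁, h₂⟩ | ⟨h₁, h₂⟩ : p = i ∨ p = i + 1 ∨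
      p = j ∨ p = j + 1 ∨ (p = 0 ∨ m + 1 < p) ∨ (1 ≤ p ∧ p < i) ∨ (i + 1 < p ∧ p < j) ∨
      (j + 1 < p ∧ p ≤ m + 1) := by omega
    all_goals simp (disch := omega) only [Equiv.swap_apply_left, Equiv.swap_apply_right,
      Equiv.swap_apply_of_ne_of_ne, combFactor_of_lt, combFactor_of_gt, combFactor_eq_one,
      one_mul, mul_one]
    · rw [(hσ (i - 1) (j - 1) (by omega) (by omega) (by omega)).eq]
    · rw [(hσ i (j - 1) hi (by omega) (by omega)).eq]
    · rw [(hσ i j hi hij (by omega)).eq]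

def combAction (m : ℕ) : ArtinBraid (m + 1) →* Equiv.Perm (ℕ × ArtinBraid m) :=
  lift (isBraidFamily_combStep m)

theorem combAction_incl (u b : ArtinBraid m) :
    combAction m (incl (Nat.le_succ m) u) (m + 1, b) = (m + 1, u * b) := by
  induction u using PresentedGroup.induction_on with | H z => ?_
  induction z using FreeGroup.induction_on generalizing b with
  | C1 => simp
  | of x =>
    rw [← PresentedGroup.of, of_eq_σ, incl_σ _ x.2, combAction, lift_σ _ ⟨x.2.1, by omega⟩,
      combStep_apply, Equiv.swap_apply_of_ne_of_ne (by omega) (by omega),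
      combFactor_of_gt (by omega) le_rfl]
  | inv_of x ih =>
    rw [map_inv, map_inv, map_inv, Equiv.Perm.inv_def, Equiv.symm_apply_eq, ih,
      mul_inv_cancel_left]
  | mul x y ihx ihy =>
    rw [map_mul, map_mul, map_mul, Equiv.Perm.mul_apply, ihy, ihx, mul_assoc]

theorem incl_succ_injective (m : ℕ) : Function.Injective (incl (Nat.le_succ m)) := by
  refine (injective_iff_map_eq_one _).2 fun u hu => ?_
  simpa [hu] using (congrArg Prod.snd (combAction_incl u 1)).symm

theorem incl_refl (n : ℕ) : incl le_rfl = MonoidHom.id (ArtinBraid n) :=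
  hom_ext fun _ hi hin => incl_σ _ ⟨hi, hin⟩

theorem incl_comp {n m k : ℕ} (h₁ : n ≤ m) (h₂ : m ≤ k) :
    (incl h₂).comp (incl h₁) = incl (h₁.trans h₂) :=
  hom_ext fun i hi hin => by
    rw [MonoidHom.comp_apply, incl_σ _ ⟨hi, hin⟩, incl_σ _ ⟨hi, by omega⟩, incl_σ _ ⟨hi, hin⟩]

theorem incl_injective {n m : ℕ} (h : n ≤ m) : Function.Injective (incl h) := by
  induction m, h using Nat.le_induction with
  | base => simp [incl_refl, Function.injective_id]
  | succ m h ih =>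
    rw [← incl_comp h (Nat.le_succ m)]
    exact (incl_succ_injective m).comp ih

end ArtinBraid

section EventualKer

variable {G ι : Type*} [Group G] {H : ι → Type*} [∀ i, Group (H i)]

def eventualKer (φ : ∀ i, G →* H i) (l : Filter ι) : Subgroup G where
  carrier := {x | ∀ᶠ i in l, φ i x = 1}
  one_mem' := by simp
  mul_mem' hx hy := (hx.and hy).mono fun i h => by simp [h.1, h.2]
  inv_mem' hx := hx.mono fun i h => by simp [h]

instance (φ : ∀ i, G →* H i) (l : Filter ι) : (eventualKer φ l).Normal :=
  ⟨fun _ hx _ => hx.mono fun i h => by simp [h]⟩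

end EventualKer

theorem sig_of_pos_s17 {i : ℕ} (hi : 0 < i) : sig i = .of ⟨i, hi⟩ :=
  dif_pos hi

theorem isBraidFamily_sig (n : ℕ) : IsBraidFamily sig n where
  braid i hi _ := by
    rw [sig_of_pos_s17 (by omega), sig_of_pos_s17 (by omega)]
    exact braid_rel1 rfl
  comm i j hi hij _ := by
    rw [Commute, SemiconjBy, sig_of_pos_s17 (by omega), sig_of_pos_s17 (by omega)]
    exact braid_rel2 (show i + 1 < j by omega)

def GenIdx.toPNat {n : ℕ} (g : GenIdx n) : ℕ+ :=
  ⟨g.1, g.2.1⟩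

namespace ArtinBraid

def toBraidInf (n : ℕ) : ArtinBraid n →* BraidInf :=
  lift (isBraidFamily_sig n)

theorem toBraidInf_mk {n : ℕ} (w : FreeGroup (GenIdx n)) :
    toBraidInf n (PresentedGroup.mk _ w) =
      PresentedGroup.mk braidRels (FreeGroup.map GenIdx.toPNat w) := by
  refine DFunLike.congr_fun (FreeGroup.ext_hom _ _ fun g => ?_ :
    (toBraidInf n).comp (PresentedGroup.mk _) =
      (PresentedGroup.mk braidRels).comp (FreeGroup.map GenIdx.toPNat)) w
  rw [MonoidHom.comp_apply, MonoidHom.comp_apply, FreeGroup.map.of,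
    ← PresentedGroup.of, of_eq_σ, toBraidInf, lift_σ _ g.2, sig_of_pos_s17 g.2.1]
  rfl

/-- Kills `σ_i` for `i ≥ m`, so it kills a braid relator only once `m` is large enough. -/
def truncate (m : ℕ) : FreeGroup ℕ+ →* ArtinBraid m :=
  FreeGroup.lift fun i => σ m i

theorem truncate_map {n m : ℕ} (h : n ≤ m) (w : FreeGroup (GenIdx n)) :
    truncate m (FreeGroup.map GenIdx.toPNat w) = incl h (PresentedGroup.mk _ w) := by
  refine DFunLike.congr_fun (FreeGroup.ext_hom _ _ fun g => ?_ :
    (truncate m).comp (FreeGroup.map GenIdx.toPNat) =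
      (incl h).comp (PresentedGroup.mk _)) w
  rw [MonoidHom.comp_apply, MonoidHom.comp_apply, FreeGroup.map.of, truncate,
    FreeGroup.lift_apply_of, ← PresentedGroup.of, of_eq_σ, incl_σ _ g.2]
  rfl

theorem truncate_braidRels {r : FreeGroup ℕ+} (hr : r ∈ braidRels) :
    ∀ᶠ m in Filter.atTop, truncate m r = 1 := by
  have hσ := isBraidFamily_σ
  obtain ⟨i, j, ⟨hij, rfl⟩ | ⟨hij, rfl⟩⟩ := hr <;>
    filter_upwards [Filter.eventually_gt_atTop (j : ℕ)] with m hm <;>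
    simp only [truncate, map_mul, map_inv, FreeGroup.lift_apply_of, mul_inv_eq_one]
  · rw [hij]
    exact (hσ m).braid i i.2 (by omega)
  · exact ((hσ m).comm i j i.2 hij hm).eq

theorem toBraidInf_injective (n : ℕ) : Function.Injective (toBraidInf n) := by
  refine (injective_iff_map_eq_one _).2 fun u hu => ?_
  obtain ⟨w, rfl⟩ := PresentedGroup.mk_surjective _ u
  rw [toBraidInf_mk, PresentedGroup.mk_eq_one_iff] at hu
  have hev := Subgroup.normalClosure_le_normal (N := eventualKer truncate Filter.atTop)
    (fun r hr => truncate_braidRels hr) hu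
  obtain ⟨m, hnm, hm⟩ := ((Filter.eventually_ge_atTop n).and hev).exists
  exact incl_injective hnm (by rwa [map_one, ← truncate_map])

theorem range_toBraidInf (n : ℕ) : (toBraidInf n).range = Bsub n := by
  rw [MonoidHom.range_eq_map, ← PresentedGroup.closure_range_of, MonoidHom.map_closure, Bsub]
  congr 1
  ext x
  constructor
  · rintro ⟨_, ⟨g, rfl⟩, rfl⟩
    exact ⟨g, g.2.1, g.2.2, by rw [of_eq_σ, toBraidInf, lift_σ _ g.2]⟩
  · rintro ⟨i, hi, hin, rfl⟩
    exact ⟨_, ⟨⟨i, hi, hin⟩, rfl⟩, by rw [of_eq_σ, toBraidInf, lift_σ _ ⟨hi, hin⟩]⟩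

end ArtinBraid

theorem ebTilde_presentation_general (n : ℕ) :
    Nonempty (PresentedGroup (ebTildeRels n) ≃* Bsub n) :=
  ⟨(ebTildeEquivArtin n).trans <|
    (MonoidHom.ofInjective (ArtinBraid.toBraidInf_injective n)).trans <|
      MulEquiv.subgroupCongr (ArtinBraid.range_toBraidInf n)⟩

/-- For every `n ≥ 3`, the group presented by generators `g̃_1, …, g̃_{n−1}` subject to the
relations (EB~) is isomorphic to the braid group `B_n`. -/
theorem ebTilde_presentation (n : ℕ) (hn : 3 ≤ n) :
    Nonempty (PresentedGroup (ebTildeRels n) ≃* Bsub n) :=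
  ebTilde_presentation_general n
end
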